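/- Let κ < 𝔭_c^- < 𝔭_c^+. Then there exist constants 0 < c₁ ≤ c₂, depending only on κ, γ_i, γ_c, 𝔭_c^-, 𝔭_c^+, and a threshold ε̄ > 0, such that for every 0 < ε < ε̄ and every p ∈ [𝔭_c^-, 𝔭_c^+] one has c₁ ε^{1/γ_c} ≤ −𝒯_ε'(p) ≤ c₂ ε^{1/γ_c}. -/

import Mathlib

/-!
Put `τ = 𝒯_ε(p)`. Since `𝒫_ε(τ) = p` and `0 ≤ κ τ^{-γᵢ} ≤ κ`, the singular part
`E = ε (τ-1)^{-γ_c}` lies in `[p - κ, p]`. By the inverse function rule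
`-𝒯_ε'(p) = 1 / (-𝒫_ε'(τ))`, and eliminating `τ - 1 = (ε / E)^{1/γ_c}` gives
`ε^{1/γ_c} (-𝒫_ε'(τ)) = κ γᵢ τ^{-γᵢ-1} ε^{1/γ_c} + γ_c E^{1+1/γ_c}`,
which for `ε ≤ 1` lies between `γ_c (𝔭_c⁻ - κ)^{1+1/γ_c}` and `κ γᵢ + γ_c (𝔭_c⁺)^{1+1/γ_c}`.
-/

open Set Filter MeasureTheory Topology

/-- The singular pressure law `𝒫_ε(τ) = κ τ^{-γᵢ} + ε (τ-1)^{-γ_c}`. -/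
noncomputable def Pe (κ γi γc ε τ : ℝ) : ℝ := κ * τ ^ (-γi) + ε * (τ - 1) ^ (-γc)

lemma continuousOn_of_strictAntiOn_of_rightInvOn {f g : ℝ → ℝ} {s t : Set ℝ}
    (hf : StrictAntiOn f s) (hs : IsOpen s) (ht : IsOpen t) (hfs : MapsTo f s t)
    (hgt : MapsTo g t s) (hfg : RightInvOn g f t) : ContinuousOn g t := by
  have hg_anti : StrictAntiOn g t := fun x hx y hy hxy => by
    by_contra! h
    have := (hf.le_iff_ge (hgt hy) (hgt hx)).2 h
    rw [hfg hx, hfg hy] at this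
    exact this.not_gt hxy
  have hg_image : g '' t = s := by
    refine (image_subset_iff.2 hgt).antisymm fun x hx => ⟨f x, hfs hx, ?_⟩
    exact hf.injOn (hgt (hfs hx)) hx (hfg (hfs hx))
  refine fun y hy => ContinuousAt.continuousWithinAt ?_
  have hneg : ContinuousAt (fun x => -g x) y := by
    refine continuousAt_of_monotoneOn_of_image_mem_nhds (s := t)
      (fun a ha b hb hab => neg_le_neg (hg_anti.antitoneOn ha hb hab)) (ht.mem_nhds hy) ?_
    rw [← image_image Neg.neg g, hg_image]
    exact (Homeomorph.neg ℝ).isOpenMap s hs |>.mem_nhds ⟨g y, hgt hy, rfl⟩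
  simpa [Function.comp_def] using continuous_neg.continuousAt.comp hneg

lemma mul_rpow_neg_sub_one_mul_rpow_one_div {x y γ : ℝ} (hx : 0 < x) (hy : 0 < y) (hγ : γ ≠ 0) :
    x * y ^ (-γ - 1) * x ^ (1 / γ) = (x * y ^ (-γ)) ^ (1 + 1 / γ) := by
  rw [Real.mul_rpow hx.le (by positivity), ← Real.rpow_mul hy.le, Real.rpow_add hx,
    Real.rpow_one]
  have : -γ * (1 + 1 / γ) = -γ - 1 := by field_simp; ring
  rw [this]; ring

section PressureLaw

variable {κ γi γc ε : ℝ}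

noncomputable def negDerivPe (κ γi γc ε τ : ℝ) : ℝ :=
  κ * γi * τ ^ (-γi - 1) + ε * γc * (τ - 1) ^ (-γc - 1)

lemma hasDerivAt_Pe {τ : ℝ} (hτ : 1 < τ) :
    HasDerivAt (Pe κ γi γc ε) (-negDerivPe κ γi γc ε τ) τ := by
  have h₁ : HasDerivAt (fun x : ℝ => x ^ (-γi)) (-γi * τ ^ (-γi - 1)) τ :=
    Real.hasDerivAt_rpow_const (Or.inl (by linarith))
  have h₂ : HasDerivAt (fun x : ℝ => (x - 1) ^ (-γc)) (-γc * (τ - 1) ^ (-γc - 1)) τ := by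
    simpa [Function.comp_def] using (Real.hasDerivAt_rpow_const (p := -γc)
      (Or.inl (sub_ne_zero.2 hτ.ne'))).comp τ ((hasDerivAt_id τ).sub_const 1)
  rw [show -negDerivPe κ γi γc ε τ = κ * (-γi * τ ^ (-γi - 1)) + ε * (-γc * (τ - 1) ^ (-γc - 1))
    by unfold negDerivPe; ring]
  exact (h₁.const_mul κ).add (h₂.const_mul ε)

lemma negDerivPe_pos (hκ : 0 ≤ κ) (hγi : 0 ≤ γi) (hγc : 0 < γc) (hε : 0 < ε) {τ : ℝ}
    (hτ : 1 < τ) : 0 < negDerivPe κ γi γc ε τ := by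
  have : 0 < (τ - 1) ^ (-γc - 1) := Real.rpow_pos_of_pos (by linarith) _
  unfold negDerivPe; positivity

lemma Pe_pos (hκ : 0 ≤ κ) (hε : 0 < ε) {τ : ℝ} (hτ : 1 < τ) : 0 < Pe κ γi γc ε τ := by
  have : 0 < (τ - 1) ^ (-γc) := Real.rpow_pos_of_pos (by linarith) _
  unfold Pe; positivity

lemma Pe_strictAntiOn (hκ : 0 ≤ κ) (hγi : 0 ≤ γi) (hγc : 0 < γc) (hε : 0 < ε) :
    StrictAntiOn (Pe κ γi γc ε) (Ioi 1) := by
  refine strictAntiOn_of_deriv_neg (convex_Ioi 1)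
    (fun τ hτ => (hasDerivAt_Pe hτ).continuousAt.continuousWithinAt) fun τ hτ => ?_
  rw [interior_Ioi] at hτ
  rw [(hasDerivAt_Pe hτ).deriv, neg_neg_iff_pos]
  exact negDerivPe_pos hκ hγi hγc hε hτ

lemma hasDerivAt_inverse_Pe (hκ : 0 ≤ κ) (hγi : 0 ≤ γi) (hγc : 0 < γc) (hε : 0 < ε)
    {T : ℝ → ℝ} (hT : ∀ p > (0:ℝ), 1 < T p ∧ Pe κ γi γc ε (T p) = p) {p : ℝ} (hp : 0 < p) :
    HasDerivAt T (-negDerivPe κ γi γc ε (T p))⁻¹ p := by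
  have hcont : ContinuousOn T (Ioi 0) :=
    continuousOn_of_strictAntiOn_of_rightInvOn (Pe_strictAntiOn hκ hγi hγc hε) isOpen_Ioi
      isOpen_Ioi (fun τ hτ => Pe_pos hκ hε hτ) (fun q hq => (hT q hq).1) fun q hq => (hT q hq).2
  refine (hasDerivAt_Pe (hT p hp).1).of_local_left_inverse
    (hcont.continuousAt (Ioi_mem_nhds hp)) ?_ ?_
  · exact neg_ne_zero.2 (negDerivPe_pos hκ hγi hγc hε (hT p hp).1).ne'
  · filter_upwards [Ioi_mem_nhds hp] with q hq using (hT q hq).2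

lemma Pe_sub_le_singular_part (hκ : 0 ≤ κ) (hγi : 0 ≤ γi) {τ : ℝ} (hτ : 1 < τ) :
    Pe κ γi γc ε τ - κ ≤ ε * (τ - 1) ^ (-γc) := by
  have : κ * τ ^ (-γi) ≤ κ * 1 :=
    mul_le_mul_of_nonneg_left (Real.rpow_le_one_of_one_le_of_nonpos hτ.le (by linarith)) hκ
  unfold Pe; linarith

lemma singular_part_le_Pe (hκ : 0 ≤ κ) {τ : ℝ} (hτ : 1 < τ) :
    ε * (τ - 1) ^ (-γc) ≤ Pe κ γi γc ε τ := by
  have : 0 ≤ τ ^ (-γi) := Real.rpow_nonneg (by linarith) _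
  unfold Pe; nlinarith

lemma negDerivPe_mul_rpow_eq (hγc : γc ≠ 0) (hε : 0 < ε) {τ : ℝ} (hτ : 1 < τ) :
    negDerivPe κ γi γc ε τ * ε ^ (1 / γc) =
      κ * γi * τ ^ (-γi - 1) * ε ^ (1 / γc) + γc * (ε * (τ - 1) ^ (-γc)) ^ (1 + 1 / γc) := by
  rw [← mul_rpow_neg_sub_one_mul_rpow_one_div hε (by linarith) hγc]
  unfold negDerivPe; ring

lemma negDerivPe_mul_rpow_le (hκ : 0 ≤ κ) (hγi : 0 ≤ γi) (hγc : 0 < γc) (hε : 0 < ε)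
    (hε1 : ε ≤ 1) {τ P : ℝ} (hτ : 1 < τ) (hP : Pe κ γi γc ε τ ≤ P) :
    negDerivPe κ γi γc ε τ * ε ^ (1 / γc) ≤ κ * γi + γc * P ^ (1 + 1 / γc) := by
  rw [negDerivPe_mul_rpow_eq hγc.ne' hε hτ]
  have hτ_pow : τ ^ (-γi - 1) ≤ 1 := Real.rpow_le_one_of_one_le_of_nonpos hτ.le (by linarith)
  have hε_pow : ε ^ (1 / γc) ≤ 1 := Real.rpow_le_one hε.le hε1 (by positivity)
  have hsing : (ε * (τ - 1) ^ (-γc)) ^ (1 + 1 / γc) ≤ P ^ (1 + 1 / γc) :=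
    Real.rpow_le_rpow (mul_nonneg hε.le (Real.rpow_nonneg (by linarith) _))
      ((singular_part_le_Pe hκ hτ).trans hP) (by positivity)
  have hregular : κ * γi * τ ^ (-γi - 1) * ε ^ (1 / γc) ≤ κ * γi := by
    calc κ * γi * τ ^ (-γi - 1) * ε ^ (1 / γc) ≤ κ * γi * 1 * 1 := by gcongr
      _ = κ * γi := by ring
  gcongr

lemma le_negDerivPe_mul_rpow (hκ : 0 ≤ κ) (hγi : 0 ≤ γi) (hγc : 0 < γc) (hε : 0 < ε)
    {τ P : ℝ} (hτ : 1 < τ) (hκP : κ ≤ P) (hP : P ≤ Pe κ γi γc ε τ) :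
    γc * (P - κ) ^ (1 + 1 / γc) ≤ negDerivPe κ γi γc ε τ * ε ^ (1 / γc) := by
  rw [negDerivPe_mul_rpow_eq hγc.ne' hε hτ]
  have hregular : 0 ≤ κ * γi * τ ^ (-γi - 1) * ε ^ (1 / γc) := by
    have := Real.rpow_nonneg (zero_le_one.trans hτ.le) (-γi - 1)
    positivity
  have hsing : (P - κ) ^ (1 + 1 / γc) ≤ (ε * (τ - 1) ^ (-γc)) ^ (1 + 1 / γc) :=
    Real.rpow_le_rpow (by linarith)
      (by linarith [Pe_sub_le_singular_part (γc := γc) (ε := ε) hκ hγi hτ]) (by positivity)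
  linarith [mul_le_mul_of_nonneg_left hsing hγc.le]

end PressureLaw

/-- On a congested-pressure interval `[𝔭_c⁻, 𝔭_c⁺] ⊂ (κ,∞)`, the derivative of `𝒯_ε`
satisfies `c₁ ε^{1/γ_c} ≤ -𝒯_ε'(p) ≤ c₂ ε^{1/γ_c}` with constants independent of `ε`. -/
theorem stmt6 (κ γi γc pc1 pc2 : ℝ) (hκ : 0 < κ) (hγi : 1 < γi) (hγc : 1 < γc)
    (hpc1 : κ < pc1) (hpc12 : pc1 < pc2)
    (T : ℝ → ℝ → ℝ)
    (hT : ∀ ε > (0:ℝ), ∀ p > (0:ℝ), 1 < T ε p ∧ Pe κ γi γc ε (T ε p) = p) :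
    ∃ c₁ c₂ εb : ℝ, 0 < c₁ ∧ c₁ ≤ c₂ ∧ 0 < εb ∧
      ∀ ε, 0 < ε → ε < εb → ∀ p ∈ Icc pc1 pc2,
        c₁ * ε ^ (1 / γc) ≤ -deriv (T ε) p ∧ -deriv (T ε) p ≤ c₂ * ε ^ (1 / γc) := by
  have hκ₀ : 0 ≤ κ := hκ.le
  have hγi₀ : 0 ≤ γi := by linarith
  have hγc₀ : 0 < γc := by linarith
  set B₁ := γc * (pc1 - κ) ^ (1 + 1 / γc)
  set B₂ := κ * γi + γc * pc2 ^ (1 + 1 / γc)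
  have hB₁ : 0 < B₁ := mul_pos hγc₀ (Real.rpow_pos_of_pos (by linarith) _)
  have hB₁₂ : B₁ ≤ B₂ := by
    have : (pc1 - κ) ^ (1 + 1 / γc) ≤ pc2 ^ (1 + 1 / γc) :=
      Real.rpow_le_rpow (by linarith) (by linarith) (by positivity)
    have := mul_le_mul_of_nonneg_left this hγc₀.le
    have : 0 ≤ κ * γi := by positivity
    linarith
  refine ⟨B₂⁻¹, B₁⁻¹, 1, inv_pos.2 (hB₁.trans_le hB₁₂), inv_anti₀ hB₁ hB₁₂, one_pos, ?_⟩
  rintro ε hε hε1 p ⟨hp1, hp2⟩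
  have hp : 0 < p := by linarith
  obtain ⟨hτ, hPe⟩ := hT ε hε p hp
  set X := negDerivPe κ γi γc ε (T ε p) * ε ^ (1 / γc)
  have hX : 0 < X := mul_pos (negDerivPe_pos hκ₀ hγi₀ hγc₀ hε hτ) (by positivity)
  have hB₁X : B₁ ≤ X := le_negDerivPe_mul_rpow hκ₀ hγi₀ hγc₀ hε hτ hpc1.le (hPe.symm ▸ hp1)
  have hXB₂ : X ≤ B₂ := negDerivPe_mul_rpow_le hκ₀ hγi₀ hγc₀ hε hε1.le hτ (hPe.symm ▸ hp2)
  have hderiv : -deriv (T ε) p = X⁻¹ * ε ^ (1 / γc) := by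
    rw [(hasDerivAt_inverse_Pe hκ₀ hγi₀ hγc₀ hε (hT ε hε) hp).deriv, inv_neg, neg_neg, mul_inv,
      mul_assoc, inv_mul_cancel₀ (by positivity), mul_one]
  rw [hderiv]
  exact ⟨by gcongr, by gcongr⟩
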